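/- Let V be a finite-dimensional vector space over Z/2Z with a nondegenerate symplectic form λ, and q a quadratic refinement. Define the Brown invariant (Gauss sum) Σ_{v ∈ V} (-1)^{q(v)}. Then this sum equals ±2^{dim(V)/2}, with sign +1 if Arf(q) = 0 and −1 if Arf(q) = 1. -/

import Mathlib

/-- `q` is a quadratic refinement of the bilinear form `B` over `ZMod 2`. -/
def IsQuadraticRefinement {V : Type*} [AddCommGroup V] [Module (ZMod 2) V]
    (B : V → V → ZMod 2) (q : V → ZMod 2) : Prop :=
  ∀ x y, q (x + y) = q x + q y + B x y

/-- `e` is a symplectic basis `(a_i, b_i)` for the form `B` (indices: `inl i ↦ a_i`,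
`inr i ↦ b_i`). -/
def IsSymplecticBasis {V : Type*} [AddCommGroup V] [Module (ZMod 2) V]
    (B : V → V → ZMod 2) {g : ℕ} (e : Module.Basis (Fin g ⊕ Fin g) (ZMod 2) V) : Prop :=
  (∀ i j, B (e (.inl i)) (e (.inr j)) = if i = j then 1 else 0) ∧
  (∀ i j, B (e (.inr i)) (e (.inl j)) = if i = j then 1 else 0) ∧
  (∀ i j, B (e (.inl i)) (e (.inl j)) = 0) ∧
  (∀ i j, B (e (.inr i)) (e (.inr j)) = 0)

/-- The Arf sum `Σ q(a_i) q(b_i)` of a quadratic refinement with respect to a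
symplectic basis. -/
noncomputable def arfSum {V : Type*} [AddCommGroup V] [Module (ZMod 2) V] {g : ℕ}
    (e : Module.Basis (Fin g ⊕ Fin g) (ZMod 2) V) (q : V → ZMod 2) : ZMod 2 :=
  ∑ i : Fin g, q (e (.inl i)) * q (e (.inr i))

/-!
In coordinates `v = Σ xᵢ aᵢ + yᵢ bᵢ` with respect to a symplectic basis, the refinement
identity together with isotropy of the spans of the `aᵢ` and of the `bᵢ` gives
`q v = Σᵢ (xᵢ q(aᵢ) + yᵢ q(bᵢ) + xᵢ yᵢ)`. Hence `(-1)^{q v}` factors over the hyperbolic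
planes, and the Gauss sum is the product of the `g` planar sums
`Σ_{x,y} (-1)^{xα + yβ + xy} = 2 (-1)^{αβ}`, i.e. `2^g (-1)^{Σ q(aᵢ) q(bᵢ)}`.
-/

open Finset

namespace ZMod

def signChar : AddChar (ZMod 2) ℤ where
  toFun a := (-1) ^ a.val
  map_zero_eq_one' := rfl
  map_add_eq_mul' := by decide

lemma signChar_eq_ite (a : ZMod 2) : signChar a = if a = 0 then 1 else -1 := by
  revert a; decide

lemma sum_signChar_hyperbolic (α β : ZMod 2) :
    ∑ p : ZMod 2 × ZMod 2, signChar (p.1 * α + p.2 * β + p.1 * p.2) = 2 * signChar (α * β) := by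
  revert α β; decide

end ZMod

lemma AddChar.map_sum_eq_prod {A M ι : Type*} [AddCommMonoid A] [CommMonoid M]
    (ψ : AddChar A M) (s : Finset ι) (f : ι → A) :
    ψ (∑ i ∈ s, f i) = ∏ i ∈ s, ψ (f i) :=
  map_sum ψ.toAddMonoidHom f s

lemma Fintype.sum_prod_inl_inr_eq_prod_sum {ι α R : Type*} [Fintype ι] [DecidableEq ι]
    [Fintype α] [CommSemiring R] (f : ι → α × α → R) :
    ∑ c : ι ⊕ ι → α, ∏ i, f i (c (.inl i), c (.inr i)) = ∏ i, ∑ p : α × α, f i p := by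
  rw [Fintype.prod_sum]
  exact Fintype.sum_equiv ((Equiv.arrowProdEquivProdArrow _ _ _).trans
    (Equiv.sumArrowEquivProdArrow _ _ _).symm).symm _ _ fun _ => rfl

namespace IsQuadraticRefinement

variable {V : Type*} [AddCommGroup V] [Module (ZMod 2) V]
  {B : V →ₗ[ZMod 2] V →ₗ[ZMod 2] ZMod 2} {q : V → ZMod 2}

lemma map_add (hq : IsQuadraticRefinement (fun x y => B x y) q) (x y : V) :
    q (x + y) = q x + q y + B x y :=
  hq x y

lemma map_zero (hq : IsQuadraticRefinement (fun x y => B x y) q) : q 0 = 0 := by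
  simpa [CharTwo.add_self_eq_zero] using hq.map_add 0 0

lemma map_smul (hq : IsQuadraticRefinement (fun x y => B x y) q) (c : ZMod 2) (v : V) :
    q (c • v) = c * q v := by
  obtain rfl | rfl : c = 0 ∨ c = 1 := by revert c; decide
  · simp [hq.map_zero]
  · simp

lemma map_sum_of_isotropic (hq : IsQuadraticRefinement (fun x y => B x y) q)
    {ι : Type*} (s : Finset ι) (f : ι → V) (hf : ∀ i ∈ s, ∀ j ∈ s, B (f i) (f j) = 0) :
    q (∑ i ∈ s, f i) = ∑ i ∈ s, q (f i) := by
  induction s using Finset.cons_induction with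
  | empty => simpa using hq.map_zero
  | cons i s _ ih =>
    have hB : B (f i) (∑ j ∈ s, f j) = 0 := by
      rw [map_sum]
      exact sum_eq_zero fun j hj => hf i (mem_cons_self i s) j (mem_cons_of_mem hj)
    rw [sum_cons, hq.map_add, sum_cons, hB, add_zero,
      ih fun a ha b hb => hf a (mem_cons_of_mem ha) b (mem_cons_of_mem hb)]

lemma map_sum_smul_of_isotropic (hq : IsQuadraticRefinement (fun x y => B x y) q)
    {ι : Type*} (s : Finset ι) (c : ι → ZMod 2) (f : ι → V)
    (hf : ∀ i ∈ s, ∀ j ∈ s, B (f i) (f j) = 0) :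
    q (∑ i ∈ s, c i • f i) = ∑ i ∈ s, c i * q (f i) := by
  rw [hq.map_sum_of_isotropic s _ fun i hi j hj => by simp [hf i hi j hj]]
  exact sum_congr rfl fun i _ => hq.map_smul _ _

lemma apply_equivFun_symm (hq : IsQuadraticRefinement (fun x y => B x y) q) {g : ℕ}
    {e : Module.Basis (Fin g ⊕ Fin g) (ZMod 2) V} (he : IsSymplecticBasis (fun x y => B x y) e)
    (c : Fin g ⊕ Fin g → ZMod 2) :
    q (e.equivFun.symm c) = ∑ i, (c (.inl i) * q (e (.inl i)) + c (.inr i) * q (e (.inr i))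
      + c (.inl i) * c (.inr i)) := by
  obtain ⟨hab, -, haa, hbb⟩ := he
  have hcross : B (∑ i, c (.inl i) • e (.inl i)) (∑ j, c (.inr j) • e (.inr j))
      = ∑ i, c (.inl i) * c (.inr i) := by
    simp [map_sum, hab, mul_comm]
  rw [Module.Basis.equivFun_symm_apply, Fintype.sum_sum_type, hq.map_add,
    hq.map_sum_smul_of_isotropic _ _ _ fun i _ j _ => haa i j,
    hq.map_sum_smul_of_isotropic _ _ _ fun i _ j _ => hbb i j, hcross,
    ← sum_add_distrib, ← sum_add_distrib]

end IsQuadraticRefinement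

/-- The Brown/Gauss sum `Σ_{v ∈ V} (-1)^{q(v)}` of a quadratic refinement of a nondegenerate
symplectic form on a `2g`-dimensional `ZMod 2`-vector space equals `±2^g`, with sign `+`
exactly when the Arf invariant is `0` and sign `-` exactly when it is `1`. -/
theorem gauss_sum_eq_sign_arf_mul_two_pow
    {V : Type*} [AddCommGroup V] [Module (ZMod 2) V] [Fintype V]
    (B : V →ₗ[ZMod 2] V →ₗ[ZMod 2] ZMod 2) (q : V → ZMod 2)
    (hq : IsQuadraticRefinement (fun x y => B x y) q)
    {g : ℕ} (e : Module.Basis (Fin g ⊕ Fin g) (ZMod 2) V)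
    (he : IsSymplecticBasis (fun x y => B x y) e) :
    ∑ v : V, ((-1 : ℤ)) ^ (q v).val =
      (if arfSum e q = 0 then 1 else -1) * 2 ^ g := by
  open ZMod in
  calc ∑ v : V, ((-1 : ℤ)) ^ (q v).val
      = ∑ c : Fin g ⊕ Fin g → ZMod 2, signChar (q (e.equivFun.symm c)) :=
        (e.equivFun.symm.toEquiv.sum_comp fun v => signChar (q v)).symm
    _ = ∏ i, ∑ p : ZMod 2 × ZMod 2,
          signChar (p.1 * q (e (.inl i)) + p.2 * q (e (.inr i)) + p.1 * p.2) := by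
        rw [← Fintype.sum_prod_inl_inr_eq_prod_sum]
        simp only [hq.apply_equivFun_symm he, AddChar.map_sum_eq_prod]
    _ = ∏ i, 2 * signChar (q (e (.inl i)) * q (e (.inr i))) := by
        simp only [sum_signChar_hyperbolic]
    _ = (if arfSum e q = 0 then 1 else -1) * 2 ^ g := by
        rw [prod_mul_distrib, prod_const, card_univ, Fintype.card_fin, ← AddChar.map_sum_eq_prod,
          ← arfSum, signChar_eq_ite, mul_comm]
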